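/- arXiv:1903.08575 — 5 statements merged into one kernel-verified Lean document; each statement's English description precedes it below -/
import Mathlib

section
/- Let G be a strongly connected directed graph with edges labeled by vectors in ℤ^d (a VASS), and let t be an edge (transition) of G. Then the ℚ-vector space spanned by the displacements (sums of edge labels) of all cycles of G that contain t equals the ℚ-vector space spanned by the displacements of all cycles of G. -/
/-- A transition of a VASS of dimension `d` with states in `Q`:
a source state, a label in `ℤ^d`, and a target state. -/
abbrev VTrans (Q : Type) (d : ℕ) := Q × (Fin d → ℤ) × Q

/-- `IsPath T p q l` : `l` is a path in the VASS with transition set `T`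
from state `p` to state `q`. -/
inductive IsPath {Q : Type} {d : ℕ} (T : Set (VTrans Q d)) : Q → Q → List (VTrans Q d) → Prop
  | nil (q : Q) : IsPath T q q []
  | cons {p q r : Q} {a : Fin d → ℤ} {l : List (VTrans Q d)} :
      (p, a, q) ∈ T → IsPath T q r l → IsPath T p r ((p, a, q) :: l)

/-- Displacement of a path: the sum of the labels of its transitions. -/
def disp {Q : Type} {d : ℕ} (l : List (VTrans Q d)) : Fin d → ℤ :=
  (l.map (fun t => t.2.1)).sum

/-- Displacement viewed in `ℚ^d`. -/
def dispQ {Q : Type} {d : ℕ} (l : List (VTrans Q d)) : Fin d → ℚ :=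
  fun i => (disp l i : ℚ)

/-- `VS T t`: the `ℚ`-vector space spanned by the displacements of the
cycles of the VASS that contain the transition `t`. -/
def VS {Q : Type} {d : ℕ} (T : Set (VTrans Q d)) (t : VTrans Q d) :
    Submodule ℚ (Fin d → ℚ) :=
  Submodule.span ℚ {v | ∃ q l, IsPath T q q l ∧ t ∈ l ∧ v = dispQ l}

/-- The `ℚ`-vector space spanned by the displacements of all cycles of the VASS. -/
def cycleSpan {Q : Type} {d : ℕ} (T : Set (VTrans Q d)) : Submodule ℚ (Fin d → ℚ) :=
  Submodule.span ℚ {v | ∃ q l, IsPath T q q l ∧ v = dispQ l}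

lemma isPath_append {Q : Type} {d : ℕ} {T : Set (VTrans Q d)} {p q r : Q}
    {l m : List (VTrans Q d)} (h1 : IsPath T p q l) (h2 : IsPath T q r m) :
    IsPath T p r (l ++ m) := by
  induction h1 with
  | nil => simpa using h2
  | cons ht _ ih => exact .cons ht (ih h2)

lemma disp_append {Q : Type} {d : ℕ} (l m : List (VTrans Q d)) :
    disp (l ++ m) = disp l + disp m := by
  simp [disp]

/-- In a strongly connected VASS, for every transition `t`, the span of the
displacements of the cycles containing `t` equals the span of the displacements
of all cycles. -/
theorem stmt0 {Q : Type} {d : ℕ} (T : Set (VTrans Q d))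
    (hsc : ∀ p q : Q, ∃ l, IsPath T p q l)
    (t : VTrans Q d) (ht : t ∈ T) :
    VS T t = cycleSpan T := by
  apply le_antisymm
  · exact Submodule.span_mono (fun v ⟨q, l, hp, _, hv⟩ => ⟨q, l, hp, hv⟩)
  · rw [cycleSpan, Submodule.span_le]
    rintro v ⟨q, c, hc, rfl⟩
    obtain ⟨p, a, p'⟩ := t
    obtain ⟨u, hu⟩ := hsc p' q
    obtain ⟨w, hw⟩ := hsc q p
    have h1 : IsPath T p p ((p, a, p') :: (u ++ c ++ w)) :=
      .cons ht (isPath_append (isPath_append hu hc) hw)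
    have h2 : IsPath T p p ((p, a, p') :: (u ++ w)) :=
      .cons ht (isPath_append hu hw)
    have hx : dispQ ((p, a, p') :: (u ++ c ++ w)) ∈ VS T (p, a, p') :=
      Submodule.subset_span ⟨p, _, h1, by simp, rfl⟩
    have hy : dispQ ((p, a, p') :: (u ++ w)) ∈ VS T (p, a, p') :=
      Submodule.subset_span ⟨p, _, h2, by simp, rfl⟩
    have key : dispQ c =
        dispQ ((p, a, p') :: (u ++ c ++ w)) - dispQ ((p, a, p') :: (u ++ w)) := by
      have hz : disp ((p, a, p') :: (u ++ c ++ w)) =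
          disp ((p, a, p') :: (u ++ w)) + disp c := by
        simp only [disp, List.map_cons, List.map_append, List.sum_cons, List.sum_append]
        abel
      funext i
      simp only [dispQ, Pi.sub_apply, ← Int.cast_sub]
      rw [hz]
      simp
    rw [key]
    exact sub_mem hx hy
end

section
/- Let h : ℕ → ℕ be monotone and inflationary. Then for every ordinal α < ω^ω and every x ∈ ℕ, the Hardy and Cichoń hierarchies satisfy h^{h_α(x)}(x) = h^α(x), i.e., the Cichoń function h_α(x) counts exactly the number of iterations of h performed by the Hardy function h^α starting from x. -/
/-!
Ordinals `α < ω^ω` are represented in Cantor normal form by their list of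
coefficients, least significant first: the list `[c₀, c₁, …, c_n]` represents
`ω^n·c_n + ⋯ + ω·c₁ + c₀`.  With the standard assignment of fundamental
sequences `(β + ω^{k+1})(x) = β + ω^k·(x+1)`, the Hardy hierarchy `h^α`
relative to `h` is characterized by the equations `HardyEqs`, and the Cichoń
hierarchy `h_α` by the equations `CichonEqs`.
-/

/-- `H` satisfies the defining equations of the Hardy hierarchy relative to
`h`: `h^0(x) = x` (a list of zeros represents the ordinal `0`),
`h^{α+1}(x) = h^α(h(x))`, and `h^λ(x) = h^{λ(x)}(x)` where for a limit
`λ = β + ω^{k+1}` (in CNF) the fundamental sequence is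
`λ(x) = β + ω^k·(x+1)`. -/
def HardyEqs (h : ℕ → ℕ) (H : List ℕ → ℕ → ℕ) : Prop :=
  (∀ m x, H (List.replicate m 0) x = x) ∧
  (∀ c l x, H ((c + 1) :: l) x = H (c :: l) (h x)) ∧
  (∀ k c r x, H (List.replicate (k + 1) 0 ++ (c + 1) :: r) x
      = H (List.replicate k 0 ++ (x + 1) :: c :: r) x)

/-- `C` satisfies the defining equations of the Cichoń hierarchy relative to
`h`: `h_0(x) = 0`, `h_{α+1}(x) = 1 + h_α(h(x))`, and `h_λ(x) = h_{λ(x)}(x)`. -/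
def CichonEqs (h : ℕ → ℕ) (C : List ℕ → ℕ → ℕ) : Prop :=
  (∀ m x, C (List.replicate m 0) x = 0) ∧
  (∀ c l x, C ((c + 1) :: l) x = 1 + C (c :: l) (h x)) ∧
  (∀ k c r x, C (List.replicate (k + 1) 0 ++ (c + 1) :: r) x
      = C (List.replicate k 0 ++ (x + 1) :: c :: r) x)

/-!
The Hardy and Cichoń hierarchies unfold along the same fundamental sequences and differ
only at successor steps, where `h^{α+1}` applies `h` once and `h_{α+1}` adds `1`. So the
identity follows by transfinite induction below `ω^ω`, for which the coefficient lists
are ordered through the ordinal they denote in Cantor normal form.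
-/

open Ordinal List

noncomputable def evalCNF : List ℕ → Ordinal.{0}
  | [] => 0
  | c :: l => ω * evalCNF l + c

theorem evalCNF_replicate_zero_append (k : ℕ) (l : List ℕ) :
    evalCNF (replicate k 0 ++ l) = ω ^ k * evalCNF l := by
  induction k with
  | zero => simp
  | succ k ih => simp [replicate_succ, evalCNF, ih, pow_succ', mul_assoc]

theorem evalCNF_cons_lt_succ (c : ℕ) (l : List ℕ) :
    evalCNF (c :: l) < evalCNF ((c + 1) :: l) := by
  simp [evalCNF]

theorem evalCNF_fundamental_lt (k c x : ℕ) (l : List ℕ) :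
    evalCNF (replicate k 0 ++ (x + 1) :: c :: l)
      < evalCNF (replicate (k + 1) 0 ++ (c + 1) :: l) := by
  rw [evalCNF_replicate_zero_append, evalCNF_replicate_zero_append]
  set β := evalCNF (c :: l)
  calc ω ^ k * (ω * β + ↑(x + 1))
      = ω ^ (k + 1) * β + ω ^ k * ↑(x + 1) := by rw [mul_add, pow_succ, mul_assoc]
    _ < ω ^ (k + 1) * β + ω ^ (k + 1) := by
        rw [pow_succ]
        gcongr
        exacts [pow_pos omega0_pos k, natCast_lt_omega0 _]
    _ = ω ^ (k + 1) * evalCNF ((c + 1) :: l) := by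
        simp only [β, evalCNF, Nat.cast_succ, ← add_assoc, mul_add, mul_one]

theorem eq_replicate_zero_or_eq_replicate_zero_append_succ (l : List ℕ) :
    (∃ m, l = replicate m 0) ∨ ∃ k c r, l = replicate k 0 ++ (c + 1) :: r := by
  induction l with
  | nil => exact .inl ⟨0, rfl⟩
  | cons a t ih =>
    rcases a with _ | c
    · rcases ih with ⟨m, rfl⟩ | ⟨k, c, r, rfl⟩
      exacts [.inl ⟨m + 1, rfl⟩, .inr ⟨k + 1, c, r, rfl⟩]
    · exact .inr ⟨0, c, t, rfl⟩

theorem cnf_induction {P : List ℕ → Prop} (zero : ∀ m, P (replicate m 0))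
    (succ : ∀ c l, P (c :: l) → P ((c + 1) :: l))
    (limit : ∀ k c l, (∀ x, P (replicate k 0 ++ (x + 1) :: c :: l)) →
      P (replicate (k + 1) 0 ++ (c + 1) :: l)) (l : List ℕ) : P l := by
  induction l using (InvImage.wf evalCNF wellFounded_lt).induction with
  | _ l ih =>
    rcases eq_replicate_zero_or_eq_replicate_zero_append_succ l with ⟨m, rfl⟩ | ⟨_ | k, c, l, rfl⟩
    · exact zero m
    · exact succ c l (ih _ (evalCNF_cons_lt_succ c l))
    · exact limit k c l fun x => ih _ (evalCNF_fundamental_lt k c x l)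

theorem stmt4_general (h : ℕ → ℕ)
    (H C : List ℕ → ℕ → ℕ) (hH : HardyEqs h H) (hC : CichonEqs h C) :
    ∀ (l : List ℕ) (x : ℕ), h^[C l x] x = H l x := by
  obtain ⟨hH0, hHs, hHl⟩ := hH
  obtain ⟨hC0, hCs, hCl⟩ := hC
  refine cnf_induction (fun m x => ?_) (fun c l ih x => ?_) (fun k c l ih x => ?_)
  · rw [hC0, hH0, Function.iterate_zero_apply]
  · rw [hCs, hHs, add_comm, Function.iterate_add_apply, Function.iterate_one, ih]
  · rw [hCl, hHl, ih]

/-- If `h` is monotone and inflationary, then for every ordinal `α < ω^ω`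
(represented by its CNF coefficient list `l`) and every `x`, the Cichoń
function counts exactly the number of iterations of `h` performed by the
Hardy function: `h^[h_α(x)](x) = h^α(x)`. -/
theorem stmt4 (h : ℕ → ℕ) (hmono : Monotone h) (hinfl : ∀ x, x ≤ h x)
    (H C : List ℕ → ℕ → ℕ) (hH : HardyEqs h H) (hC : CichonEqs h C) :
    ∀ (l : List ℕ) (x : ℕ), h^[C l x] x = H l x :=
  stmt4_general h H C hH hC
end

section
/- With the successor function H(x) = x + 1, the Hardy hierarchy satisfies H^{ω²}(x) = 2^{x+1}·(x+1) − 1 for all x ∈ ℕ. -/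
/-- With the successor function `H(x) = x + 1`, the Hardy hierarchy satisfies
`H^{ω²}(x) = 2^{x+1}·(x+1) − 1`.  The ordinal `ω²` is represented by the
coefficient list `[0, 0, 1]` (least significant first). -/
theorem stmt7 (H : List ℕ → ℕ → ℕ) (hH : HardyEqs Nat.succ H) :
    ∀ x : ℕ, H [0, 0, 1] x = 2 ^ (x + 1) * (x + 1) - 1 := by
  obtain ⟨h0, hs, hl⟩ := hH
  have hA : ∀ m l x, H (m :: l) x = H (0 :: l) (x + m) := by
    intro m
    induction m with
    | zero => intro l x; simp
    | succ c ih =>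
      intro l x
      rw [hs c l x, ih]
      show H (0 :: l) (Nat.succ x + c) = _
      congr 1
      omega
  have hB : ∀ n x, H [0, n, 0] x = 2 ^ n * (x + 1) - 1 := by
    intro n
    induction n with
    | zero =>
      intro x
      have := h0 3 x
      simpa using this
    | succ n ih =>
      intro x
      have hlim := hl 0 n [0] x
      simp at hlim
      rw [hlim, hA, ih]
      have : 2 ^ (n + 1) * (x + 1) = 2 ^ n * (x + (x + 1) + 1) := by ring
      omega
  intro x
  have hlim := hl 1 0 [] x
  simp [List.replicate] at hlim
  rw [hlim, hB]
end

section
/- Let A be an m × n integer matrix and c ∈ ℤ^m. Let X = {x ∈ ℕ^n : A x = c} and X₀ = {x ∈ ℕ^n : A x = 0}. Then every vector in X can be written as the sum of one vector x ∈ X with ‖x‖₁ ≤ ‖c‖₁ · (2 + max_i ∑_j |A_{i,j}|)^m plus a finite sum of vectors x₀ ∈ X₀ each with ‖x₀‖₁ ≤ (2 + max_i ∑_j |A_{i,j}|)^m. -/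
/-!
Move `c` to the left: with `|cᵢ|` copies of the extra column `-(sign cᵢ) eᵢ`, the solution `y`
becomes a zero-sum multiset of vectors of `ℤ^m`, and in every row the columns involved have total
absolute value at most `B - 1`, where `B = 2 + maxᵢ ∑ⱼ |Aᵢⱼ|`. List these vectors in a balanced
order, in which at every moment all of them have used up nearly the same share of their
multiplicities. Then every prefix sum lies in the box `∏ᵢ [-Pᵢ, Qᵢ]` bounded by the sums of the
positive and of the negative parts of row `i`, a box with at most `B ^ m` points. As long as the
list is longer than that, two prefix sums coincide and the block between them is a zero-sum block
of length at most `B ^ m`; cutting out such blocks splits the list into short zero-sum blocks.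
Blocks without an extra column are homogeneous solutions; the others add up to a solution of
`A x = c`, and as each contains an extra column there are at most `‖c‖₁` of them.
-/

open Finset

lemma Finset.exists_max_ratio {ι : Type*} {s : Finset ι} (hs : s.Nonempty) (f g : ι → ℕ)
    (hg : ∀ j ∈ s, 0 < g j) : ∃ j₀ ∈ s, ∀ j ∈ s, f j * g j₀ ≤ f j₀ * g j := by
  obtain ⟨j₀, hj₀, hmax⟩ := s.exists_max_image (fun j => (f j : ℚ) / g j) hs
  refine ⟨j₀, hj₀, fun j hj => ?_⟩
  have h := hmax j hj
  rw [div_le_div_iff₀ (by exact_mod_cast hg j hj) (by exact_mod_cast hg j₀ hj₀)] at h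
  exact_mod_cast h

namespace Multiset

variable {ι κ : Type*}

lemma sum_map_eq_sum_count_nsmul [Fintype ι] [DecidableEq ι] {M : Type*} [AddCommMonoid M]
    (s : Multiset ι) (f : ι → M) : (s.map f).sum = ∑ a, s.count a • f a := by
  rw [Finset.sum_multiset_map_count]
  refine sum_subset (subset_univ _) fun a _ ha => ?_
  rw [count_eq_zero.mpr (by simpa using ha), zero_smul]

lemma card_le_sum_count_of_forall_exists_mem [Fintype κ] [DecidableEq ι]
    (D : Multiset (Multiset ι)) (g : κ → ι) (hD : ∀ w ∈ D, ∃ i, g i ∈ w) :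
    card D ≤ ∑ i, D.sum.count (g i) := by
  have hsum : ∑ i, D.sum.count (g i) = (D.map fun w => ∑ i, w.count (g i)).sum := by
    simp only [sum_map_sum, ← coe_countAddMonoidHom, ← map_multiset_sum]
  have hpos : ∀ w ∈ D, 1 ≤ ∑ i, w.count (g i) := fun w hw => by
    obtain ⟨i, hi⟩ := hD w hw
    exact (one_le_count_iff_mem.mpr hi).trans
      (Finset.single_le_sum (f := fun i => w.count (g i)) (fun _ _ => Nat.zero_le _) (mem_univ i))
  simpa [hsum] using card_nsmul_le_sum (s := D.map fun w => ∑ i, w.count (g i)) (a := 1)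
    (by simpa using hpos)

lemma sum_map_sum_eq_zero {M : Type*} [AddCommMonoid M] (D : Multiset (Multiset ι)) (f : ι → M)
    (hD : ∀ w ∈ D, (w.map f).sum = 0) : (D.sum.map f).sum = 0 := by
  rw [← join, map_join, sum_join, map_map]
  exact sum_eq_zero fun z hz => by
    obtain ⟨w, hw, rfl⟩ := mem_map.mp hz
    exact hD w hw

def inlCount [DecidableEq ι] [DecidableEq κ] : Multiset (ι ⊕ κ) →+ (ι → ℕ) :=
  AddMonoidHom.pi fun j => countAddMonoidHom (Sum.inl j)

@[simp]
lemma inlCount_apply [DecidableEq ι] [DecidableEq κ] (w : Multiset (ι ⊕ κ)) (j : ι) :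
    w.inlCount j = w.count (Sum.inl j) := rfl

lemma sum_count_inl_le_card [Fintype ι] [Fintype κ] [DecidableEq ι] [DecidableEq κ]
    (w : Multiset (ι ⊕ κ)) : ∑ j, w.count (Sum.inl j) ≤ card w := by
  rw [← sum_count_eq_card (s := univ) fun _ _ => mem_univ _, Fintype.sum_sum_type]
  exact Nat.le_add_right _ _

end Multiset

section BalancedOrder

variable {ι : Type*} {μ ν : ι → ℕ}

/-- In terms of fractions, `ν j' / μ j' ≤ (ν j + 1) / μ j`: the shares of the multiplicities `μ`
used up by `ν` differ by less than one unit. -/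
structure IsBalanced (μ ν : ι → ℕ) : Prop where
  le : ∀ j, ν j ≤ μ j
  mul_le : ∀ j j', ν j' * μ j ≤ (ν j + 1) * μ j'

lemma isBalanced_zero (μ : ι → ℕ) : IsBalanced μ 0 :=
  ⟨fun _ => Nat.zero_le _, fun _ _ => by simp⟩

variable [Fintype ι]

theorem IsBalanced.sum_nsmul_le_sum_negPart (h : IsBalanced μ ν) {v : ι → ℤ}
    (hv : ∑ a, μ a • v a = 0) : ∑ a, ν a • v a ≤ ∑ a, (v a)⁻ := by
  simp only [nsmul_eq_mul] at hv ⊢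
  by_cases hμ : ∀ a, μ a = 0
  · have hν : ∀ a, ν a = 0 := fun a => Nat.eq_zero_of_le_zero (hμ a ▸ h.le a)
    simpa [hν] using sum_nonneg fun a _ => negPart_nonneg (v a)
  push Not at hμ
  obtain ⟨a₀, ha₀⟩ := hμ
  -- `s` maximises `ν a / μ a`
  obtain ⟨s, hs, hmax⟩ := exists_max_ratio (s := univ.filter fun a => 0 < μ a)
    ⟨a₀, by simpa [Nat.pos_iff_ne_zero] using ha₀⟩ ν μ (by simp)
  simp only [mem_filter, mem_univ, true_and] at hs hmax
  set t : ι → ℤ := fun a => ν s * μ a - ν a * μ s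
  have ht : ∀ a, 0 ≤ t a ∧ t a ≤ μ s := fun a => by
    have := h.mul_le a s
    have := h.le a
    rcases Nat.eq_zero_or_pos (μ a) with ha | ha
    · have hνa : ν a = 0 := by omega
      simp [t, ha, hνa]
    · have := hmax a ha
      constructor <;> simp only [t] <;> nlinarith
  have key : (μ s : ℤ) * ∑ a, ν a * v a = ∑ a, t a * -v a := by
    have : ∑ a, t a * -v a = μ s * ∑ a, ν a * v a - ν s * ∑ a, μ a * v a := by
      rw [mul_sum, mul_sum, ← sum_sub_distrib]
      exact sum_congr rfl fun a _ => by ring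
    rw [this, hv, mul_zero, sub_zero]
  refine le_of_mul_le_mul_left ?_ (show (0 : ℤ) < μ s by exact_mod_cast hs)
  rw [key, mul_sum]
  refine sum_le_sum fun a _ => ?_
  calc t a * -v a ≤ t a * (v a)⁻ := mul_le_mul_of_nonneg_left (neg_le_negPart _) (ht a).1
    _ ≤ μ s * (v a)⁻ := mul_le_mul_of_nonneg_right (ht a).2 (negPart_nonneg _)

theorem IsBalanced.sum_nsmul_mem_Icc {κ : Type*} (h : IsBalanced μ ν) {v : ι → κ → ℤ}
    (hv : ∑ a, μ a • v a = 0) :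
    ∑ a, ν a • v a ∈ Set.Icc (-∑ a, (v a)⁺) (∑ a, (v a)⁻) := by
  have hvi : ∀ i, ∑ a, μ a • v a i = 0 := fun i => by simpa using congrFun hv i
  have hvi' : ∀ i, ∑ a, μ a • -v a i = 0 := fun i => by
    simp only [smul_neg, sum_neg_distrib, hvi i, neg_zero]
  refine ⟨fun i => ?_, fun i => ?_⟩
  · have := h.sum_nsmul_le_sum_negPart (hvi' i)
    simp only [smul_neg, sum_neg_distrib, negPart_neg] at this
    simpa [Pi.posPart_apply] using neg_le.mp this
  · simpa [Pi.negPart_apply] using h.sum_nsmul_le_sum_negPart (hvi i)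

variable [DecidableEq ι]

lemma IsBalanced.exists_add_single (h : IsBalanced μ ν) (hne : ν ≠ μ) :
    ∃ j₀, ν j₀ < μ j₀ ∧ IsBalanced μ (ν + Pi.single j₀ 1) := by
  set s := univ.filter fun j => ν j < μ j
  have hs : s.Nonempty := by
    obtain ⟨j, hj⟩ := Function.ne_iff.mp hne
    exact ⟨j, by simpa [s] using lt_of_le_of_ne (h.le j) hj⟩
  -- `j₀` minimises `(ν j + 1) / μ j` among the `j` not yet used up
  obtain ⟨j₀, hj₀, hmin⟩ := exists_max_ratio hs μ (ν + 1) fun _ _ => Nat.succ_pos _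
  simp only [s, mem_filter, mem_univ, true_and, Pi.add_apply, Pi.one_apply] at hj₀ hmin
  have hν : ∀ j, (ν + Pi.single j₀ 1 : ι → ℕ) j = ν j + if j = j₀ then 1 else 0 := fun j => by
    simp [Pi.single_apply]
  refine ⟨j₀, hj₀, fun j => ?_, fun j j' => ?_⟩
  · have := h.le j
    rw [hν]
    split_ifs with hj
    · subst hj; omega
    · omega
  rw [hν, hν]
  by_cases hj' : j' = j₀
  · subst hj'
    rcases lt_or_ge (ν j) (μ j) with hj | hj
    · have := hmin j hj
      split_ifs <;> nlinarith
    · have hj : ν j = μ j := le_antisymm (h.le j) hj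
      have : (ν j' + 1) * μ j ≤ μ j' * μ j := Nat.mul_le_mul_right _ hj₀
      split_ifs <;> nlinarith
  · have := h.mul_le j j'
    split_ifs <;> nlinarith

theorem IsBalanced.exists_list {μ ν : ι → ℕ} (h : IsBalanced μ ν) :
    ∃ L : List ι, (∀ a, ν a + L.count a = μ a) ∧
      ∀ l, l <+: L → IsBalanced μ (ν + fun a => l.count a) := by
  by_cases hν : ν = μ
  · refine ⟨[], by simp [hν], fun l hl => ?_⟩
    rw [List.prefix_nil.mp hl]
    convert h
    ext
    simp
  obtain ⟨j₀, hlt, h'⟩ := h.exists_add_single hν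
  obtain ⟨L, hL, hpre⟩ := h'.exists_list
  have hcons : ∀ l a, ν a + (j₀ :: l).count a = (ν + Pi.single j₀ 1 : ι → ℕ) a + l.count a := by
    intro l a
    by_cases ha : a = j₀
    · subst ha
      simp
      omega
    · simp [ha, Ne.symm ha]
  refine ⟨j₀ :: L, fun a => by rw [hcons, hL], fun l hl => ?_⟩
  rcases List.prefix_cons_iff.mp hl with rfl | ⟨t, rfl, ht⟩
  · convert h
    ext
    simp
  · convert hpre t ht using 1
    ext a
    exact hcons t a
termination_by ∑ a, (μ a - ν a)
decreasing_by
  refine Finset.sum_lt_sum (fun a _ => ?_) ⟨j₀, mem_univ _, ?_⟩ <;>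
    simp only [Pi.add_apply, Pi.single_apply] <;> split_ifs <;> omega

theorem exists_list_count_eq_forall_prefix_isBalanced (μ : ι → ℕ) :
    ∃ L : List ι, (∀ a, L.count a = μ a) ∧ ∀ l, l <+: L → IsBalanced μ fun a => l.count a := by
  simpa using (isBalanced_zero μ).exists_list

end BalancedOrder

section ZeroSumBlocks

variable {ι G : Type*} [AddCancelCommMonoid G]

lemma List.exists_infix_sum_eq_zero_of_card_lt (S : Finset G) (f : ι → G) (L : List ι)
    (hS : ∀ l, l <+: L → (l.map f).sum ∈ S) (hlen : #S < L.length) :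
    ∃ l₁ l₂ l₃, L = l₁ ++ l₂ ++ l₃ ∧ l₂ ≠ [] ∧ l₂.length ≤ #S ∧ (l₂.map f).sum = 0 := by
  obtain ⟨a, ha, b, hb, hne, heq⟩ := exists_ne_map_eq_of_card_lt_of_maps_to
    (s := Finset.range (#S + 1)) (f := fun k => ((L.take k).map f).sum) (by simp)
    fun k _ => hS _ (L.take_prefix k)
  wlog hab : a < b generalizing a b
  · exact this b hb a ha hne.symm heq.symm (by omega)
  simp only [Finset.mem_range] at ha hb
  have htake : L.take b = L.take a ++ (L.drop a).take (b - a) := by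
    rw [← List.take_add, Nat.add_sub_cancel' hab.le]
  refine ⟨L.take a, (L.drop a).take (b - a), (L.drop a).drop (b - a), by simp, ?_, ?_, ?_⟩
  · rw [← List.length_pos_iff]
    simp only [List.length_take, List.length_drop]
    omega
  · simp only [List.length_take]
    omega
  · simp only [htake, List.map_append, List.sum_append] at heq
    exact add_eq_left.mp heq.symm

theorem List.exists_zero_sum_decomposition_of_prefix_sums_mem (S : Finset G) (f : ι → G)
    (L : List ι) (hL : (L.map f).sum = 0) (hS : ∀ l, l <+: L → (l.map f).sum ∈ S) :
    ∃ D : Multiset (Multiset ι), D.sum = L ∧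
      ∀ w ∈ D, (w.map f).sum = 0 ∧ Multiset.card w ≤ #S := by
  by_cases hlen : L.length ≤ #S
  · exact ⟨{(L : Multiset ι)}, by simp, by simpa using ⟨hL, hlen⟩⟩
  obtain ⟨l₁, l₂, l₃, hsplit, hne, hl₂, h₂⟩ :=
    L.exists_infix_sum_eq_zero_of_card_lt S f hS (by omega)
  subst hsplit
  -- cutting out a zero-sum block leaves a list whose prefix sums are prefix sums of `L`
  have hS' : ∀ l, l <+: l₁ ++ l₃ → (l.map f).sum ∈ S := by
    rintro l ⟨t, ht⟩
    rcases List.append_eq_append_iff.mp ht with ⟨a', rfl, rfl⟩ | ⟨c', rfl, rfl⟩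
    · exact hS l ⟨a' ++ l₂ ++ l₃, by simp⟩
    · simpa [h₂] using hS (l₁ ++ l₂ ++ c') ⟨t, by simp⟩
  obtain ⟨D, hD, hDf⟩ := exists_zero_sum_decomposition_of_prefix_sums_mem S f (l₁ ++ l₃)
    (by simpa [h₂] using hL) hS'
  refine ⟨l₂ ::ₘ D, ?_, ?_⟩
  · simp only [Multiset.sum_cons, hD, ← Multiset.coe_add]
    abel
  · intro w hw
    rcases Multiset.mem_cons.mp hw with rfl | hw
    · simpa using ⟨h₂, hl₂⟩
    · exact hDf w hw
termination_by L.length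
decreasing_by
  subst hsplit
  simp only [List.length_append]
  have := List.length_pos_iff.mpr hne
  omega

end ZeroSumBlocks

section ZeroSumDecomposition

variable {ι κ : Type*} [Fintype ι] [Fintype κ] [DecidableEq κ]

lemma card_Icc_neg_sum_posPart_sum_negPart (v : ι → κ → ℤ) :
    #(Icc (-∑ a, (v a)⁺) (∑ a, (v a)⁻)) = ∏ i, (1 + ∑ a, (v a i).natAbs) := by
  rw [Pi.card_Icc]
  refine prod_congr rfl fun i _ => ?_
  rw [Int.card_Icc, ← Int.toNat_natCast (1 + ∑ a, (v a i).natAbs)]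
  congr 1
  simp only [Finset.sum_apply, Pi.neg_apply, Pi.posPart_apply, Pi.negPart_apply, Nat.cast_add,
    Nat.cast_one, Nat.cast_sum, Int.natCast_natAbs, ← posPart_add_negPart, sum_add_distrib]
  ring

theorem Multiset.exists_zero_sum_decomposition [DecidableEq ι] (v : ι → κ → ℤ)
    (M : Multiset ι) (hM : (M.map v).sum = 0) :
    ∃ D : Multiset (Multiset ι), D.sum = M ∧
      ∀ w ∈ D, (w.map v).sum = 0 ∧ card w ≤ ∏ i, (1 + ∑ a, (v a i).natAbs) := by
  obtain ⟨L, hLM, hL⟩ := exists_list_count_eq_forall_prefix_isBalanced M.count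
  have hLM : (L : Multiset ι) = M := Multiset.ext.mpr (by simpa using hLM)
  have hsum : ∑ a, M.count a • v a = 0 := by rwa [← sum_map_eq_sum_count_nsmul]
  obtain ⟨D, hD, hDv⟩ := L.exists_zero_sum_decomposition_of_prefix_sums_mem
    (Finset.Icc (-∑ a, (v a)⁺) (∑ a, (v a)⁻)) v
    (by rwa [← Multiset.sum_coe, ← Multiset.map_coe, hLM]) fun l hl => by
      rw [Finset.mem_Icc, ← Multiset.sum_coe, ← Multiset.map_coe, sum_map_eq_sum_count_nsmul]
      simpa using (hL l hl).sum_nsmul_mem_Icc hsum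
  refine ⟨D, hD.trans hLM, fun w hw => ?_⟩
  rw [← card_Icc_neg_sum_posPart_sum_negPart]
  exact hDv w hw

end ZeroSumDecomposition

section AugmentedSystem

variable {ι κ : Type*} [Fintype ι] [Fintype κ] [DecidableEq κ]

-- the columns of `A`, followed by the columns `-(sign cᵢ) eᵢ`; taking the latter `|cᵢ|` times
-- turns `A y = c` into a homogeneous system
def augmentedColumn (A : Matrix κ ι ℤ) (c : κ → ℤ) : ι ⊕ κ → κ → ℤ :=
  Sum.elim (fun j i => A i j) fun i => Pi.single i (-(c i).sign)

lemma prod_one_add_sum_natAbs_augmentedColumn_le (A : Matrix κ ι ℤ) (c : κ → ℤ) :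
    ∏ i, (1 + ∑ a, (augmentedColumn A c a i).natAbs) ≤
      (2 + univ.sup fun i => ∑ j, (A i j).natAbs) ^ Fintype.card κ := by
  refine prod_le_pow_card _ _ _ fun i _ => ?_
  have hA : ∑ j, (A i j).natAbs ≤ univ.sup fun i => ∑ j, (A i j).natAbs :=
    le_sup (f := fun i => ∑ j, (A i j).natAbs) (mem_univ i)
  have hc : ∑ i', ((Pi.single i' (-(c i').sign) : κ → ℤ) i).natAbs ≤ 1 := by
    rw [sum_eq_single i (fun i' _ hi' => by simp [hi'.symm]) (by simp)]
    simp only [Pi.single_eq_same, Int.natAbs_neg, Int.natAbs_sign]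
    split_ifs <;> simp
  simp only [augmentedColumn, Fintype.sum_sum_type, Sum.elim_inl, Sum.elim_inr]
  omega

variable [DecidableEq ι]

def augmentedMultiset (y : ι → ℕ) (c : κ → ℤ) : Multiset (ι ⊕ κ) :=
  ∑ j, y j • {Sum.inl j} + ∑ i, (c i).natAbs • {Sum.inr i}

@[simp]
lemma count_inl_augmentedMultiset (y : ι → ℕ) (c : κ → ℤ) (j : ι) :
    (augmentedMultiset y c).count (Sum.inl j) = y j := by
  simp [augmentedMultiset, Multiset.count_sum', Multiset.count_singleton]

@[simp]
lemma count_inr_augmentedMultiset (y : ι → ℕ) (c : κ → ℤ) (i : κ) :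
    (augmentedMultiset y c).count (Sum.inr i) = (c i).natAbs := by
  simp [augmentedMultiset, Multiset.count_sum', Multiset.count_singleton]

lemma sum_map_augmentedColumn_eq_zero_iff (A : Matrix κ ι ℤ) (c : κ → ℤ)
    (w : Multiset (ι ⊕ κ)) : (w.map (augmentedColumn A c)).sum = 0 ↔
      ∀ i, ∑ j, A i j * w.count (Sum.inl j) = (c i).sign * w.count (Sum.inr i) := by
  simp only [funext_iff, Pi.zero_apply, Multiset.sum_map_eq_sum_count_nsmul,
    Fintype.sum_sum_type]
  refine forall_congr' fun i => ?_
  simp [augmentedColumn, Pi.single_apply, mul_comm, add_neg_eq_zero]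

lemma sum_map_augmentedColumn_augmentedMultiset {A : Matrix κ ι ℤ} {c : κ → ℤ} {y : ι → ℕ}
    (hy : ∀ i, ∑ j, A i j * (y j : ℤ) = c i) :
    ((augmentedMultiset y c).map (augmentedColumn A c)).sum = 0 :=
  (sum_map_augmentedColumn_eq_zero_iff A c _).mpr fun i => by simp [hy, Int.sign_mul_abs]

theorem exists_solution_add_homogeneous_of_sum_eq_augmentedMultiset (A : Matrix κ ι ℤ)
    (c : κ → ℤ) (y : ι → ℕ) (T : ℕ) (D : Multiset (Multiset (ι ⊕ κ)))
    (hD : D.sum = augmentedMultiset y c) (hDA : ∀ w ∈ D, (w.map (augmentedColumn A c)).sum = 0)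
    (hDT : ∀ w ∈ D, Multiset.card w ≤ T) :
    ∃ (x : ι → ℕ) (S : Multiset (ι → ℕ)),
      (∀ i, ∑ j, A i j * (x j : ℤ) = c i) ∧
      (∀ v ∈ S, ∀ i, ∑ j, A i j * (v j : ℤ) = 0) ∧
      y = x + S.sum ∧ (∑ j, x j) ≤ (∑ i, (c i).natAbs) * T ∧ (∀ v ∈ S, (∑ j, v j) ≤ T) := by
  set I := D.filter fun w => ∃ i, Sum.inr i ∈ w
  set H := D.filter fun w => ¬∃ i, Sum.inr i ∈ w
  have hsplit : D.sum = I.sum + H.sum := by rw [← Multiset.sum_add, Multiset.filter_add_not]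
  have hH : ∀ i, H.sum.count (Sum.inr i) = 0 := fun i => by
    rw [Multiset.count_eq_zero, ← Multiset.join, Multiset.mem_join]
    rintro ⟨w, hw, hiw⟩
    exact (Multiset.mem_filter.mp hw).2 ⟨i, hiw⟩
  have hI : ∀ i, I.sum.count (Sum.inr i) = (c i).natAbs := fun i => by
    rw [← count_inr_augmentedMultiset y c, ← hD, hsplit, Multiset.count_add, hH, add_zero]
  have hIA := I.sum_map_sum_eq_zero _ fun w hw => hDA w (Multiset.mem_of_mem_filter hw)
  refine ⟨I.sum.inlCount, H.map Multiset.inlCount, fun i => ?_, ?_, ?_, ?_, ?_⟩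
  · simpa [hI, Int.sign_mul_abs] using (sum_map_augmentedColumn_eq_zero_iff A c _).mp hIA i
  · simp only [Multiset.mem_map, forall_exists_index, and_imp]
    rintro _ w hw rfl i
    obtain ⟨hwD, hw⟩ := Multiset.mem_filter.mp hw
    have := (sum_map_augmentedColumn_eq_zero_iff A c w).mp (hDA w hwD) i
    rwa [Multiset.count_eq_zero.mpr fun h => hw ⟨i, h⟩, Nat.cast_zero, mul_zero] at this
  · rw [← map_multiset_sum, ← map_add, ← hsplit, hD]
    ext j
    simp
  · have hIT : ∀ n ∈ I.map Multiset.card, n ≤ T := fun n hn => by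
      obtain ⟨w, hw, rfl⟩ := Multiset.mem_map.mp hn
      exact hDT w (Multiset.mem_of_mem_filter hw)
    calc ∑ j, I.sum.inlCount j
        ≤ Multiset.card I.sum := by simpa using I.sum.sum_count_inl_le_card
      _ = (I.map Multiset.card).sum := Multiset.card_join I
      _ ≤ Multiset.card I * T := by simpa using Multiset.sum_le_card_nsmul _ T hIT
      _ ≤ (∑ i, (c i).natAbs) * T := by
        gcongr
        simpa [hI] using I.card_le_sum_count_of_forall_exists_mem Sum.inr (by simp [I])
  · simp only [Multiset.mem_map, forall_exists_index, and_imp]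
    rintro _ w hw rfl
    simpa using w.sum_count_inl_le_card.trans (hDT w (Multiset.mem_of_mem_filter hw))

end AugmentedSystem

open Finset in
/-- Pottier's decomposition theorem.  Let `A` be an `m × n` integer matrix and
`c ∈ ℤ^m`.  Every nonnegative integer solution `y` of `A y = c` is the sum of a
nonnegative solution `x` of `A x = c` with
`‖x‖₁ ≤ ‖c‖₁ · (2 + max_i ∑_j |A_{i,j}|)^m` and a finite (possibly empty)
multiset of nonnegative solutions `x₀` of the homogeneous system `A x₀ = 0`,
each with `‖x₀‖₁ ≤ (2 + max_i ∑_j |A_{i,j}|)^m`. -/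
theorem stmt8 (m n : ℕ) (A : Matrix (Fin m) (Fin n) ℤ) (c : Fin m → ℤ)
    (y : Fin n → ℕ) (hy : ∀ i, ∑ j, A i j * (y j : ℤ) = c i) :
    ∃ (x : Fin n → ℕ) (S : Multiset (Fin n → ℕ)),
      (∀ i, ∑ j, A i j * (x j : ℤ) = c i) ∧
      (∀ v ∈ S, ∀ i, ∑ j, A i j * (v j : ℤ) = 0) ∧
      y = x + S.sum ∧
      (∑ j, x j) ≤ (∑ i, (c i).natAbs) *
        (2 + Finset.univ.sup fun i => ∑ j, (A i j).natAbs) ^ m ∧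
      (∀ v ∈ S, (∑ j, v j) ≤
        (2 + Finset.univ.sup fun i => ∑ j, (A i j).natAbs) ^ m) := by
  obtain ⟨D, hD, hDw⟩ := (augmentedMultiset y c).exists_zero_sum_decomposition
    (augmentedColumn A c) (sum_map_augmentedColumn_augmentedMultiset hy)
  have hT := prod_one_add_sum_natAbs_augmentedColumn_le A c
  rw [Fintype.card_fin] at hT
  exact exists_solution_add_homogeneous_of_sum_eq_augmentedMultiset A c y _ D hD
    (fun w hw => (hDw w hw).1) fun w hw => (hDw w hw).2.trans hT
end

section
/- Let A be an m × n integer matrix, c ∈ ℤ^m, X = {x ∈ ℕ^n : A x = c} and X₀ = {x ∈ ℕ^n : A x = 0}. Suppose X is nonempty. Then for a fixed index j ∈ {1,…,n}, the set of values {x(j) : x ∈ X} is unbounded if and only if there exists x₀ ∈ X₀ with x₀(j) > 0. -/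
/-!
If `x₀ ≥ 0` solves the homogeneous system with `x₀ j > 0`, then `p + N x₀` is a solution for every
particular solution `p` and every `N`, so the `j`-th coordinate is unbounded. Conversely, take
solutions `x_N` with `N ≤ x_N j`. By Dickson's lemma they have a subsequence that is monotone for the
pointwise order on `ℕⁿ`, and along it the `j`-th coordinate still tends to infinity; the difference
of two suitable members of this subsequence is a nonnegative homogeneous solution with positive
`j`-th coordinate.
-/

open Matrix

section Kernel

variable {ι M : Type*} [AddCommMonoid M] (L : (ι → ℕ) →+ M) {c : M} {j : ι}

theorem AddMonoidHom.unbounded_of_exists_ker_pos {p : ι → ℕ} (hp : L p = c)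
    (hker : ∃ x₀, L x₀ = 0 ∧ 0 < x₀ j) (N : ℕ) : ∃ x, L x = c ∧ N ≤ x j := by
  obtain ⟨x₀, hx₀, hx₀j⟩ := hker
  refine ⟨p + N • x₀, by rw [map_add, map_nsmul, hp, hx₀, nsmul_zero, add_zero], ?_⟩
  calc N ≤ N * x₀ j := Nat.le_mul_of_pos_right N hx₀j
    _ ≤ (p + N • x₀) j := by simp

theorem AddMonoidHom.exists_ker_pos_of_unbounded [Finite ι] [IsLeftCancelAdd M]
    (hunb : ∀ N : ℕ, ∃ x, L x = c ∧ N ≤ x j) : ∃ x₀, L x₀ = 0 ∧ 0 < x₀ j := by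
  choose x hx hxj using hunb
  obtain ⟨g, hg⟩ := wellQuasiOrdered_le.exists_monotone_subseq x
  set b := x (g 0) j + 1
  have hle : x (g 0) ≤ x (g b) := hg 0 b b.zero_le
  have hlt : x (g 0) j < x (g b) j :=
    calc x (g 0) j < b := Nat.lt_succ_self _
      _ ≤ g b := g.strictMono.le_apply
      _ ≤ x (g b) j := hxj _
  refine ⟨x (g b) - x (g 0), ?_, by simpa using hlt⟩
  apply add_left_cancel (a := L (x (g 0)))
  rw [← map_add, add_tsub_cancel_of_le hle, hx, hx, add_zero]

theorem AddMonoidHom.unbounded_iff_exists_ker_pos [Finite ι] [IsLeftCancelAdd M]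
    (hne : ∃ p, L p = c) :
    (∀ N : ℕ, ∃ x, L x = c ∧ N ≤ x j) ↔ ∃ x₀, L x₀ = 0 ∧ 0 < x₀ j :=
  ⟨L.exists_ker_pos_of_unbounded, fun h ↦ L.unbounded_of_exists_ker_pos hne.choose_spec h⟩

end Kernel

def Matrix.natMulVec {m n : Type*} [Fintype n] (A : Matrix m n ℤ) : (n → ℕ) →+ (m → ℤ) :=
  (mulVecLin A).toAddMonoidHom.comp (AddMonoidHom.compLeft (Nat.castAddMonoidHom ℤ) n)

theorem Matrix.natMulVec_eq_iff {m n : Type*} [Fintype n] (A : Matrix m n ℤ) (x : n → ℕ)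
    (c : m → ℤ) : A.natMulVec x = c ↔ ∀ i, ∑ k, A i k * (x k : ℤ) = c i := by
  simp [natMulVec, funext_iff, mulVec, dotProduct]

/-- Let `A` be an `m × n` integer matrix, `c ∈ ℤ^m`, and let
`X = {x ∈ ℕ^n : A x = c}` and `X₀ = {x ∈ ℕ^n : A x = 0}`.  If `X` is
nonempty, then for a fixed index `j`, the set of values `{x(j) : x ∈ X}` is
unbounded if and only if there exists `x₀ ∈ X₀` with `x₀(j) > 0`. -/
theorem stmt9 (m n : ℕ) (A : Matrix (Fin m) (Fin n) ℤ) (c : Fin m → ℤ)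
    (j : Fin n)
    (hne : ∃ x : Fin n → ℕ, ∀ i, ∑ k, A i k * (x k : ℤ) = c i) :
    (∀ N : ℕ, ∃ x : Fin n → ℕ, (∀ i, ∑ k, A i k * (x k : ℤ) = c i) ∧ N ≤ x j)
      ↔ (∃ x₀ : Fin n → ℕ, (∀ i, ∑ k, A i k * (x₀ k : ℤ) = 0) ∧ 0 < x₀ j) := by
  simp only [← natMulVec_eq_iff, ← Pi.zero_def] at hne ⊢
  exact A.natMulVec.unbounded_iff_exists_ker_pos hne
end
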